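/- Let V be a finite-dimensional vector space over a field, g a linear automorphism with (g+1)^2 = 0, and k an even positive integer with 0 < k < dim V. Then (Λ^k(g) - 1)^{k+1} = 0. -/

import Mathlib

/-!
Since `k` is even, `Λ^k(g) = Λ^k(-g)`, and `-g = 1 + N` with `N ^ 2 = 0`, so `(-g) ^ m = 1 + m N`.
By multilinearity, `Λ^k(-g) ^ m` sends `v₁ ∧ ⋯ ∧ v_k` to a polynomial in `m` of degree `≤ k` with
coefficients in `⋀^k V`. On the other hand `(A - 1) ^ (k + 1) x` is the `(k + 1)`-st forward
difference of `m ↦ A ^ m x` at `0`, which kills every polynomial of degree `≤ k`.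
-/

open ExteriorAlgebra

/-- The endomorphism of the `k`-th exterior power induced by an endomorphism. -/
noncomputable def extPow {R M : Type*} [CommRing R] [AddCommGroup M] [Module R M]
    (k : ℕ) (f : M →ₗ[R] M) : Module.End R (⋀[R]^k M) :=
  (ExteriorAlgebra.map f).toLinearMap.restrict (p := ⋀[R]^k M) (q := ⋀[R]^k M) (fun x hx => by
    have mono : ∀ (j : ℕ) (A B : Submodule R (ExteriorAlgebra R M)), A ≤ B → A ^ j ≤ B ^ j := by
      intro j A B h
      induction j with
      | zero => exact le_rfl
      | succ n ih => rw [pow_succ, pow_succ]; first | exact mul_le_mul' ih h | exact Submodule.mul_le_mul' ih h | exact Submodule.mul_le_mul_left ih |>.trans (Submodule.mul_le_mul_right h)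
    have h1 : Submodule.map (ExteriorAlgebra.map f).toLinearMap (⋀[R]^k M) ≤ ⋀[R]^k M := by
      rw [exteriorPower, Submodule.map_pow, ι_range_map_map]
      refine mono _ _ _ ?_
      rintro z hz
      obtain ⟨y, -, rfl⟩ := hz
      exact LinearMap.mem_range_self _ y
    exact h1 ⟨x, hx, rfl⟩)

open Finset fwdDiff

-- `Δ_[1] ^[n]` needs the space: `]^` is a token of the `⋀[R]^n` notation.

theorem one_add_pow_of_sq_eq_zero {R : Type*} [Semiring R] {N : R} (h : N ^ 2 = 0) (m : ℕ) :
    (1 + N) ^ m = 1 + m * N := by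
  induction m with
  | zero => simp
  | succ m ih =>
    rw [pow_succ, ih, Nat.cast_succ, mul_add, mul_one, add_mul, mul_assoc, ← sq, h]
    simp only [mul_zero, add_zero, add_mul, one_mul]
    abel

theorem MultilinearMap.map_add_smul_univ {R ι M₁ M₂ : Type*} [CommSemiring R] [AddCommMonoid M₁]
    [AddCommMonoid M₂] [Module R M₁] [Module R M₂] [DecidableEq ι] [Fintype ι]
    (f : MultilinearMap R (fun _ : ι => M₁) M₂) (v u : ι → M₁) (t : R) :
    f (v + t • u) = ∑ s : Finset ι, t ^ s.card • f (s.piecewise u v) := by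
  rw [add_comm, map_add_univ]
  refine sum_congr rfl fun s _ => ?_
  rw [← prod_const, ← map_piecewise_smul]
  congr 1
  ext i
  by_cases hi : i ∈ s <;> simp [hi]

section ForwardDifference

variable {R M : Type*} [CommRing R] [AddCommGroup M] [Module R M]

theorem fwdDiff_iter_pow_apply (A : Module.End R M) (x : M) (n : ℕ) :
    Δ_[1] ^[n] (fun m : ℕ => (A ^ m) x) = fun m => (A ^ m) (((A - 1) ^ n) x) := by
  induction n generalizing x with
  | zero => simp
  | succ n ih =>
    have hΔ : Δ_[1] (fun m : ℕ => (A ^ m) x) = fun m => (A ^ m) ((A - 1) x) := by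
      ext m
      simp [fwdDiff, pow_succ, map_sub]
    rw [Function.iterate_succ_apply, hΔ, ih, pow_succ, Module.End.mul_apply]

theorem fwdDiff_iter_natCast_pow_smul_eq_zero {j n : ℕ} (h : j < n) (w : M) :
    Δ_[1] ^[n] (fun m : ℕ => (m : R) ^ j • w) = 0 := by
  ext y
  have hR := congr_fun (fwdDiff_iter_pow_eq_zero_of_lt (R := R) h) (y : R)
  rw [fwdDiff_iter_eq_sum_shift] at hR ⊢
  simp only [nsmul_eq_mul, mul_one, Pi.zero_apply] at hR
  simp only [smul_eq_mul, mul_one, Nat.cast_add, ← smul_assoc, ← sum_smul, hR, zero_smul,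
    Pi.zero_apply]

theorem sub_one_pow_apply_eq_zero_of_pow_apply_eq_sum {ι : Type*} (A : Module.End R M) (x : M)
    (s : Finset ι) (d : ι → ℕ) (w : ι → M) {n : ℕ} (hd : ∀ i ∈ s, d i < n)
    (hx : ∀ m : ℕ, (A ^ m) x = ∑ i ∈ s, (m : R) ^ d i • w i) :
    ((A - 1) ^ n) x = 0 := by
  have h0 := congr_fun (fwdDiff_iter_pow_apply A x n) 0
  rw [pow_zero, Module.End.one_apply] at h0
  rw [← h0, funext hx, ← sum_fn, fwdDiff_iter_finsetSum, Finset.sum_apply]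
  exact sum_eq_zero fun i hi => by
    rw [fwdDiff_iter_natCast_pow_smul_eq_zero (hd i hi), Pi.zero_apply]

end ForwardDifference

theorem extPow_eq_map {R M : Type*} [CommRing R] [AddCommGroup M] [Module R M] (k : ℕ)
    (f : Module.End R M) : extPow k f = exteriorPower.map k f := by
  ext v
  simp [extPow, ExteriorAlgebra.map_apply_ιMulti, Function.comp_def]

namespace exteriorPower

variable {R M : Type*} [CommRing R] [AddCommGroup M] [Module R M] {k : ℕ}

theorem map_pow (f : Module.End R M) (m : ℕ) : map k (f ^ m) = map k f ^ m := by
  induction m with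
  | zero => exact map_id
  | succ m ih => rw [pow_succ, pow_succ, Module.End.mul_eq_comp, map_comp, ih]; rfl

theorem map_neg_of_even (hk : Even k) (f : Module.End R M) : map k (-f) = map k f := by
  ext v
  have := (ιMulti R k (M := M)).toMultilinearMap.map_smul_univ (fun _ => (-1 : R)) (f ∘ v)
  simp_all [hk.neg_one_pow, Function.comp_def]

theorem map_one_add_pow_apply_ιMulti {N : Module.End R M} (hN : N ^ 2 = 0) (m : ℕ)
    (v : Fin k → M) :
    (map k (1 + N) ^ m) (ιMulti R k v) =
      ∑ s : Finset (Fin k), (m : R) ^ s.card • ιMulti R k (s.piecewise (N ∘ v) v) := by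
  classical
  have hv : ⇑((1 + N) ^ m) ∘ v = v + (m : R) • (N ∘ v) := by
    ext i
    simp [one_add_pow_of_sq_eq_zero hN, Nat.cast_smul_eq_nsmul]
  rw [← map_pow, map_apply_ιMulti, hv]
  exact (ιMulti R k).toMultilinearMap.map_add_smul_univ _ _ _

end exteriorPower

theorem extPow_sub_one_pow_eq_zero_of_even_general {K V : Type*} [Field K]
    [AddCommGroup V] [Module K V]
    (g : Module.End K V)
    (k : ℕ) (hkeven : Even k)
    (h : (g + 1) ^ 2 = 0) :
    (extPow k g - 1) ^ (k + 1) = 0 := by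
  have hN : (-(g + 1)) ^ 2 = 0 := by rw [neg_sq, h]
  have hg : extPow k g = exteriorPower.map k (1 + -(g + 1)) := by
    rw [extPow_eq_map, ← exteriorPower.map_neg_of_even hkeven]
    congr 1
    abel
  rw [hg]
  refine exteriorPower.linearMap_ext (AlternatingMap.ext fun v => ?_)
  exact sub_one_pow_apply_eq_zero_of_pow_apply_eq_sum _ (exteriorPower.ιMulti K k v) univ card _
    (fun s _ => Nat.lt_succ_of_le ((card_le_univ s).trans_eq (Fintype.card_fin k)))
    (fun m => exteriorPower.map_one_add_pow_apply_ιMulti hN m v)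

/-- If $(g+1)^2 = 0$ and $k$ is even, then $(Λ^k(g) - 1)^{k+1} = 0$. -/
theorem extPow_sub_one_pow_eq_zero_of_even {K V : Type*} [Field K] [CharZero K]
    [AddCommGroup V] [Module K V] [FiniteDimensional K V]
    (g : Module.End K V) (hgbij : Function.Bijective g)
    (k : ℕ) (hkpos : 0 < k) (hkeven : Even k) (hk' : k < Module.finrank K V)
    (h : (g + 1) ^ 2 = 0) :
    (extPow k g - 1) ^ (k + 1) = 0 :=
  extPow_sub_one_pow_eq_zero_of_even_general g k hkeven h
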